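/- Let (Ω, μ) be a measure space, let P be a set of probability densities on Ω (measurable, nonnegative, integrating to 1 with respect to μ), with the L¹(μ) norm, and let k ∈ ℕ. Define k-mix(P) = { Σ_{i=1}^k w_i p_i : w ∈ Δ_k, p_i ∈ P }. Then for all ε > 0 and δ > 0, N(k-mix(P), ε + δ) ≤ N(P, ε)^k · N(Δ_k, δ). -/

import Mathlib

open MeasureTheory

noncomputable section

/-- The probability simplex `Δ_k` in `ℝ^k`. -/
def probSimplex (k : ℕ) : Set (Fin k → ℝ) :=
  { w | (∀ i, 0 ≤ w i) ∧ ∑ i, w i = 1 }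

/-- Covering number of `V` at scale `ε` with respect to the distance `ρ`: the minimal
cardinality of a finite subset `S ⊆ V` such that every `v ∈ V` is within `ε` of some
`s ∈ S` (equal to `⊤` if no finite cover exists). -/
def coverNum {α : Type*} (ρ : α → α → ℝ) (V : Set α) (ε : ℝ) : ℕ∞ :=
  sInf ((fun S : Finset α => (S.card : ℕ∞)) ''
    { S | ↑S ⊆ V ∧ ∀ v ∈ V, ∃ s ∈ S, ρ v s ≤ ε })

/-- `k`-mix of a family of densities: convex combinations of `k` of its members. -/
def kmix {Ω : Type*} (k : ℕ) (P : Set (Ω → ℝ)) : Set (Ω → ℝ) :=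
  { f | ∃ (w : Fin k → ℝ) (p : Fin k → Ω → ℝ),
      (∀ i, 0 ≤ w i) ∧ (∑ i, w i = 1) ∧ (∀ i, p i ∈ P) ∧
      f = fun x => ∑ i, w i * p i x }

lemma coverNum_empty {α : Type*} (ρ : α → α → ℝ) (ε : ℝ) :
    coverNum ρ (∅ : Set α) ε = 0 := by
  refine le_antisymm ?_ zero_le
  exact sInf_le ⟨∅, ⟨by simp, by simp⟩, by simp⟩

lemma one_le_coverNum {α : Type*} {ρ : α → α → ℝ} {V : Set α} {ε : ℝ}
    (hV : V.Nonempty) : 1 ≤ coverNum ρ V ε := by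
  refine le_sInf ?_
  rintro b ⟨S, ⟨-, hcov⟩, rfl⟩
  obtain ⟨v, hv⟩ := hV
  obtain ⟨s, hs, -⟩ := hcov v hv
  have : 0 < S.card := Finset.card_pos.2 ⟨s, hs⟩
  show (1 : ℕ∞) ≤ (S.card : ℕ∞)
  exact_mod_cast this

lemma coverNum_exists {α : Type*} {ρ : α → α → ℝ} {V : Set α} {ε : ℝ}
    (h : coverNum ρ V ε ≠ ⊤) :
    ∃ S : Finset α, ↑S ⊆ V ∧ (∀ v ∈ V, ∃ s ∈ S, ρ v s ≤ ε) ∧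
      (S.card : ℕ∞) = coverNum ρ V ε := by
  have hne : ((fun S : Finset α => (S.card : ℕ∞)) ''
      { S | ↑S ⊆ V ∧ ∀ v ∈ V, ∃ s ∈ S, ρ v s ≤ ε }).Nonempty := by
    by_contra hemp
    rw [Set.not_nonempty_iff_eq_empty] at hemp
    exact h (by rw [coverNum, hemp, sInf_empty])
  have := csInf_mem hne
  obtain ⟨S, ⟨hS1, hS2⟩, hS3⟩ := this
  exact ⟨S, hS1, hS2, hS3⟩

lemma integrable_of_density {Ω : Type*} [MeasurableSpace Ω] {μ : Measure Ω}
    {p : Ω → ℝ} (h1 : ∫ x, p x ∂μ = 1) : Integrable p μ := by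
  by_contra h
  rw [integral_undef h] at h1
  norm_num at h1

lemma mix_dist_le {Ω : Type*} [MeasurableSpace Ω] {μ : Measure Ω} {k : ℕ}
    (w v : Fin k → ℝ) (p q : Fin k → Ω → ℝ)
    (hw : ∀ i, 0 ≤ w i)
    (hpI : ∀ i, Integrable (p i) μ) (hqI : ∀ i, Integrable (q i) μ)
    (hqnn : ∀ i x, 0 ≤ q i x) (hq1 : ∀ i, ∫ x, q i x ∂μ = 1) :
    ∫ x, |(∑ i, w i * p i x) - ∑ i, v i * q i x| ∂μ ≤
      (∑ i, w i * ∫ x, |p i x - q i x| ∂μ) + ∑ i, |w i - v i| := by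
  have hInt : ∀ i : Fin k,
      Integrable (fun x => w i * |p i x - q i x| + |w i - v i| * q i x) μ :=
    fun i => (((hpI i).sub (hqI i)).abs.const_mul _).add ((hqI i).const_mul _)
  have hmono : ∫ x, |(∑ i, w i * p i x) - ∑ i, v i * q i x| ∂μ ≤
      ∫ x, ∑ i, (w i * |p i x - q i x| + |w i - v i| * q i x) ∂μ := by
    refine integral_mono_of_nonneg (Filter.Eventually.of_forall fun x => abs_nonneg _)
      (integrable_finset_sum _ fun i _ => hInt i)
      (Filter.Eventually.of_forall fun x => ?_)
    calc |(∑ i, w i * p i x) - ∑ i, v i * q i x|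
        = |∑ i, (w i * p i x - v i * q i x)| := by rw [Finset.sum_sub_distrib]
      _ ≤ ∑ i, |w i * p i x - v i * q i x| := Finset.abs_sum_le_sum_abs _ _
      _ ≤ ∑ i, (w i * |p i x - q i x| + |w i - v i| * q i x) := by
          refine Finset.sum_le_sum fun i _ => ?_
          calc |w i * p i x - v i * q i x|
              ≤ |w i * p i x - w i * q i x| + |w i * q i x - v i * q i x| :=
                abs_sub_le _ _ _
            _ = w i * |p i x - q i x| + |w i - v i| * q i x := by
                rw [← mul_sub, ← sub_mul, abs_mul, abs_mul,
                  abs_of_nonneg (hw i), abs_of_nonneg (hqnn i x)]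
  rw [integral_finset_sum _ (fun i _ => hInt i)] at hmono
  refine hmono.trans_eq ?_
  rw [← Finset.sum_add_distrib]
  refine Finset.sum_congr rfl fun i _ => ?_
  have hA : Integrable (fun a => w i * |p i a - q i a|) μ := by
    exact ((hpI i).sub (hqI i)).abs.const_mul _
  have hB : Integrable (fun a => |w i - v i| * q i a) μ := (hqI i).const_mul _
  rw [integral_add hA hB, integral_const_mul, integral_const_mul, hq1 i, mul_one]

/-- Lemma `mixcover`: if `P` is a set of probability densities on a
measure space `(Ω, μ)`, then in `L¹(μ)` distance,
`N(k-mix(P), ε + δ) ≤ N(P, ε)^k · N(Δ_k, δ)`. -/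
theorem kmix_covering {Ω : Type*} [MeasurableSpace Ω] (μ : Measure Ω)
    (P : Set (Ω → ℝ))
    (hP : ∀ p ∈ P, Measurable p ∧ (∀ x, 0 ≤ p x) ∧ ∫ x, p x ∂μ = 1)
    (k : ℕ) (ε δ : ℝ) (hε : 0 < ε) (hδ : 0 < δ) :
    coverNum (fun p q => ∫ x, |p x - q x| ∂μ) (kmix k P) (ε + δ) ≤
      coverNum (fun p q => ∫ x, |p x - q x| ∂μ) P ε ^ k *
        coverNum (fun v w : Fin k → ℝ => ∑ i, |v i - w i|) (probSimplex k) δ := by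
  classical
  by_cases hKE : kmix k P = ∅
  · rw [hKE, coverNum_empty]; exact zero_le
  obtain ⟨f, hf⟩ := Set.nonempty_iff_ne_empty.2 hKE
  obtain ⟨w0, p0, hw0, hw0s, hp0, -⟩ := hf
  have hk : 0 < k := by
    rcases Nat.eq_zero_or_pos k with h | h
    · subst h; simp at hw0s
    · exact h
  have hPne : P.Nonempty := ⟨p0 ⟨0, hk⟩, hp0 _⟩
  have hΔne : (probSimplex k).Nonempty := ⟨w0, hw0, hw0s⟩
  set N1 := coverNum (fun p q => ∫ x, |p x - q x| ∂μ) P ε with hN1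
  set N2 := coverNum (fun v w : Fin k → ℝ => ∑ i, |v i - w i|) (probSimplex k) δ with hN2
  have hN1pos : 1 ≤ N1 := one_le_coverNum hPne
  have hN2pos : 1 ≤ N2 := one_le_coverNum hΔne
  by_cases h1 : N1 = ⊤
  · have : N1 ^ k * N2 = ⊤ := by
      rw [h1, ENat.top_pow hk.ne', ENat.top_mul (by intro h; rw [h] at hN2pos; simp at hN2pos)]
    rw [this]; exact le_top
  by_cases h2 : N2 = ⊤
  · have : N1 ^ k * N2 = ⊤ := by
      rw [h2, ENat.mul_top]
      exact pow_ne_zero _ (by intro h; rw [h] at hN1pos; simp at hN1pos)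
    rw [this]; exact le_top
  obtain ⟨S1, hS1sub, hS1cov, hS1card⟩ := coverNum_exists h1
  obtain ⟨S2, hS2sub, hS2cov, hS2card⟩ := coverNum_exists h2
  -- the candidate cover of the mixture class
  set T : Finset (Ω → ℝ) :=
    ((Fintype.piFinset fun _ : Fin k => S1) ×ˢ S2).image
      (fun pq => fun x => ∑ i, pq.2 i * pq.1 i x) with hT
  have hTsub : ↑T ⊆ kmix k P := by
    intro g hg
    simp only [hT, Finset.coe_image, Set.mem_image, Finset.mem_coe,
      Finset.mem_product, Fintype.mem_piFinset] at hg
    obtain ⟨⟨q, v⟩, ⟨hq, hv⟩, rfl⟩ := hg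
    have hvΔ := hS2sub hv
    exact ⟨v, q, hvΔ.1, hvΔ.2, fun i => hS1sub (hq i), rfl⟩
  have hTcov : ∀ g ∈ kmix k P, ∃ s ∈ T, (∫ x, |g x - s x| ∂μ) ≤ ε + δ := by
    rintro g ⟨w, p, hw, hws, hp, rfl⟩
    choose q hqS hqd using fun i => hS1cov (p i) (hp i)
    obtain ⟨v, hvS, hvd⟩ := hS2cov w ⟨hw, hws⟩
    refine ⟨fun x => ∑ i, v i * q i x, ?_, ?_⟩
    · refine Finset.mem_image.2 ⟨(q, v), ?_, rfl⟩
      exact Finset.mem_product.2 ⟨Fintype.mem_piFinset.2 hqS, hvS⟩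
    · have hpI : ∀ i, Integrable (p i) μ :=
        fun i => integrable_of_density (hP _ (hp i)).2.2
      have hqI : ∀ i, Integrable (q i) μ :=
        fun i => integrable_of_density (hP _ (hS1sub (hqS i))).2.2
      have hqnn : ∀ i x, 0 ≤ q i x := fun i => (hP _ (hS1sub (hqS i))).2.1
      have hq1 : ∀ i, ∫ x, q i x ∂μ = 1 := fun i => (hP _ (hS1sub (hqS i))).2.2
      calc ∫ x, |(∑ i, w i * p i x) - ∑ i, v i * q i x| ∂μ
          ≤ (∑ i, w i * ∫ x, |p i x - q i x| ∂μ) + ∑ i, |w i - v i| :=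
            mix_dist_le w v p q hw hpI hqI hqnn hq1
        _ ≤ (∑ i : Fin k, w i * ε) + δ := by
            refine add_le_add (Finset.sum_le_sum fun i _ => ?_) hvd
            exact mul_le_mul_of_nonneg_left (hqd i) (hw i)
        _ = ε + δ := by rw [← Finset.sum_mul, hws, one_mul]
  have hmem : coverNum (fun p q => ∫ x, |p x - q x| ∂μ) (kmix k P) (ε + δ) ≤
      (T.card : ℕ∞) :=
    sInf_le ⟨T, ⟨hTsub, hTcov⟩, rfl⟩
  refine hmem.trans ?_
  have hcard : T.card ≤ S1.card ^ k * S2.card := by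
    calc T.card ≤ ((Fintype.piFinset fun _ : Fin k => S1) ×ˢ S2).card :=
        Finset.card_image_le
      _ = S1.card ^ k * S2.card := by
          rw [Finset.card_product, Fintype.card_piFinset]
          simp [Finset.prod_const]
  calc (T.card : ℕ∞) ≤ ((S1.card ^ k * S2.card : ℕ) : ℕ∞) := by exact_mod_cast hcard
    _ = (S1.card : ℕ∞) ^ k * (S2.card : ℕ∞) := by push_cast; ring
    _ = N1 ^ k * N2 := by rw [hS1card, hS2card]
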